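/- For the simple symmetric random walk on ℤ started at 1, the generating function of the first hitting time of 0 equals g(x) = (1 - √(1 - x²))/x for x ∈ (0,1). -/

import Mathlib

open List DyckStep

/-- Position at time `k` of the walk started at `1`: `Y_k = 1 + ∑_{i<k} (±1)`. -/
def walkFromOne (n : ℕ) (s : Fin n → Bool) (k : ℕ) : ℤ :=
  1 + ∑ i ∈ Finset.univ.filter (fun i : Fin n => (i : ℕ) < k), (if s i then (1 : ℤ) else -1)

namespace GFaux

def stepInt (b : Bool) : ℤ := if b then 1 else -1

def bsum (l : List Bool) : ℤ := (l.map stepInt).sum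

@[simp] lemma bsum_nil : bsum [] = 0 := rfl

@[simp] lemma bsum_append (l₁ l₂ : List Bool) : bsum (l₁ ++ l₂) = bsum l₁ + bsum l₂ := by
  simp [bsum]

@[simp] lemma bsum_cons (b : Bool) (l : List Bool) : bsum (b :: l) = stepInt b + bsum l := by
  simp [bsum, stepInt]

@[simp] lemma bsum_singleton (b : Bool) : bsum [b] = stepInt b := by simp

lemma bsum_eq_count (l : List Bool) : bsum l = 2 * (l.count true : ℤ) - l.length := by
  induction l with
  | nil => simp
  | cons b t ih => cases b <;> simp [List.count_cons, ih, stepInt] <;> ring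

lemma walkFromOne_eq (n : ℕ) (s : Fin n → Bool) (k : ℕ) :
    walkFromOne n s k = 1 + bsum ((List.ofFn s).take k) := by
  rw [walkFromOne, bsum, List.map_take, List.map_ofFn]
  rw [List.sum_take_ofFn]
  rfl

def Pl (l : List Bool) : Prop := bsum l = -1 ∧ ∀ k < l.length, 0 ≤ bsum (l.take k)

lemma nonneg_prefix (l : List Bool) (h : ∀ k < l.length, bsum (l.take k) ≠ -1) :
    ∀ k, k < l.length → 0 ≤ bsum (l.take k) := by
  intro k
  induction k with
  | zero => intro _; simp
  | succ k ih =>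
    intro hk
    have hk' : k < l.length := Nat.lt_of_succ_lt hk
    have h1 : 0 ≤ bsum (l.take k) := ih hk'
    rw [List.take_succ, List.getElem?_eq_getElem hk']
    have h2 : bsum (l.take (k+1)) ≠ -1 := h (k+1) hk
    rw [List.take_succ, List.getElem?_eq_getElem hk'] at h2
    simp only [Option.toList_some, bsum_append, bsum_singleton] at h2 ⊢
    have : stepInt (l[k]) = 1 ∨ stepInt (l[k]) = -1 := by
      cases l[k] <;> simp [stepInt]
    rcases this with h3 | h3 <;> omega

lemma P_iff_Pl (n : ℕ) (s : Fin n → Bool) :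
    (walkFromOne n s n = 0 ∧ ∀ k, k < n → walkFromOne n s k ≠ 0) ↔ Pl (List.ofFn s) := by
  have hlen : (List.ofFn s).length = n := List.length_ofFn
  have htake : (List.ofFn s).take n = List.ofFn s :=
    List.take_of_length_le hlen.le
  constructor
  · rintro ⟨h0, hpos⟩
    rw [walkFromOne_eq, htake] at h0
    constructor
    · linarith
    · intro k hk
      refine nonneg_prefix _ ?_ k (by omega)
      intro j hj hc
      exact hpos j (by omega) (by rw [walkFromOne_eq, hc]; ring)
  · rintro ⟨h0, hpre⟩
    constructor
    · rw [walkFromOne_eq, htake]; linarith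
    · intro k hk
      rw [walkFromOne_eq]
      have := hpre k (by omega)
      intro hc
      linarith

/-! ### Bool/DyckStep conversions -/

def boolOf : DyckStep → Bool
  | U => true
  | D => false

def stepOf (b : Bool) : DyckStep := if b then U else D

@[simp] lemma stepOf_boolOf (x : DyckStep) : stepOf (boolOf x) = x := by cases x <;> rfl

@[simp] lemma boolOf_stepOf (b : Bool) : boolOf (stepOf b) = b := by cases b <;> rfl

lemma bsum_map_boolOf (w : List DyckStep) :
    bsum (w.map boolOf) = (w.count U : ℤ) - w.count D := by
  induction w with
  | nil => simp
  | cons x t ih =>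
    cases x <;> simp [List.count_cons, ih, stepInt, boolOf] <;> ring

lemma countU_add_countD (w : List DyckStep) : w.count U + w.count D = w.length := by
  induction w with
  | nil => simp
  | cons x t ih => cases x <;> simp [List.count_cons, ih] <;> omega

end GFaux

namespace GFaux

lemma Pl_decomp {m : ℕ} {l : List Bool} (hlen : l.length = 2 * m + 1) (hl : Pl l) :
    bsum l.dropLast = 0 ∧ l.getLast (by intro h; simp [h] at hlen) = false := by
  have hne : l ≠ [] := by intro h; simp [h] at hlen
  have hsplit : l.dropLast ++ [l.getLast hne] = l := List.dropLast_append_getLast hne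
  have hdt : l.dropLast = l.take (2 * m) := by
    rw [List.dropLast_eq_take, hlen]; rfl
  have h1 : 0 ≤ bsum l.dropLast := by
    rw [hdt]; exact hl.2 (2 * m) (by omega)
  have h2 : bsum l.dropLast + stepInt (l.getLast hne) = -1 := by
    have := hl.1
    rw [← hsplit, bsum_append, bsum_singleton] at this
    linarith
  have h3 : stepInt (l.getLast hne) = 1 ∨ stepInt (l.getLast hne) = -1 := by
    cases l.getLast hne <;> simp [stepInt]
  have h4 : stepInt (l.getLast hne) = -1 := by rcases h3 with h | h <;> omega
  refine ⟨by omega, ?_⟩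
  cases hg : l.getLast hne
  · rfl
  · rw [hg] at h4; simp [stepInt] at h4

lemma dyck_cond1 {m : ℕ} {l : List Bool} (hlen : l.length = 2 * m + 1) (hl : Pl l) :
    (l.dropLast.map stepOf).count U = (l.dropLast.map stepOf).count D := by
  have h := bsum_map_boolOf (l.dropLast.map stepOf)
  rw [List.map_map] at h
  simp only [Function.comp_def, boolOf_stepOf, List.map_id'] at h
  have h0 := (Pl_decomp hlen hl).1
  omega

lemma dyck_cond2 {m : ℕ} {l : List Bool} (hlen : l.length = 2 * m + 1) (hl : Pl l) (i : ℕ) :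
    ((l.dropLast.map stepOf).take i).count D ≤ ((l.dropLast.map stepOf).take i).count U := by
  rw [← List.map_take]
  have h := bsum_map_boolOf ((l.dropLast.take i).map stepOf)
  rw [List.map_map] at h
  simp only [Function.comp_def, boolOf_stepOf, List.map_id'] at h
  have hdt : l.dropLast = l.take (2 * m) := by
    rw [List.dropLast_eq_take, hlen]; rfl
  have h0 : 0 ≤ bsum (l.dropLast.take i) := by
    rw [hdt, List.take_take]
    exact hl.2 _ (by omega)
  omega

/-- The Dyck word obtained by dropping the final down-step of a first-passage list. -/
def toDyck {m : ℕ} (l : List Bool) (hlen : l.length = 2 * m + 1) (hl : Pl l) : DyckWord :=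
  ⟨l.dropLast.map stepOf, dyck_cond1 hlen hl, dyck_cond2 hlen hl⟩

lemma semilength_toDyck {m : ℕ} (l : List Bool) (hlen : l.length = 2 * m + 1) (hl : Pl l) :
    (toDyck l hlen hl).semilength = m := by
  have h2 := @DyckWord.two_mul_semilength_eq_length (toDyck l hlen hl)
  have hlen2 : ((toDyck l hlen hl) : List DyckStep).length = 2 * m := by
    show (l.dropLast.map stepOf).length = 2 * m
    simp [List.length_dropLast, hlen]
  omega

/-- The equivalence between first-passage lists of length `2m+1` and Dyck words of
semilength `m`. -/
def plEquivDyck (m : ℕ) :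
    {l : List Bool // l.length = 2 * m + 1 ∧ Pl l} ≃ {p : DyckWord // p.semilength = m} where
  toFun l := ⟨toDyck l.1 l.2.1 l.2.2, semilength_toDyck l.1 l.2.1 l.2.2⟩
  invFun p := by
    refine ⟨p.1.toList.map boolOf ++ [false], ?_, ?_, ?_⟩
    · have := @DyckWord.two_mul_semilength_eq_length p.1
      rw [p.2] at this
      simp [← this]
    · rw [bsum_append, bsum_singleton, bsum_map_boolOf, p.1.count_U_eq_count_D]
      simp [stepInt]
    · intro k hk
      have hlen : (p.1.toList.map boolOf).length = 2 * m := by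
        have := @DyckWord.two_mul_semilength_eq_length p.1
        rw [p.2] at this
        simp [← this]
      rw [List.length_append, hlen] at hk
      simp only [List.length_singleton] at hk
      rw [List.take_append_of_le_length (by omega)]
      rw [← List.map_take, bsum_map_boolOf]
      have := p.1.count_D_le_count_U k
      omega
  left_inv := by
    rintro ⟨l, hlen, hl⟩
    have hne : l ≠ [] := by intro h; simp [h] at hlen
    apply Subtype.ext
    show (l.dropLast.map stepOf).map boolOf ++ [false] = l
    rw [List.map_map]
    have hco : (boolOf ∘ stepOf) = id := by funext b; simp
    rw [hco, List.map_id]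
    have h2 := (Pl_decomp hlen hl).2
    conv_rhs => rw [← List.dropLast_append_getLast hne]
    rw [h2]
  right_inv := by
    rintro ⟨p, hp⟩
    apply Subtype.ext
    apply DyckWord.ext
    show ((p.toList.map boolOf ++ [false]).dropLast.map stepOf) = p.toList
    rw [List.dropLast_concat, List.map_map]
    have hco : (stepOf ∘ boolOf) = id := by funext x; simp
    rw [hco, List.map_id]

lemma ofFn_get_cast {α : Type*} (l : List α) {n : ℕ} (h : l.length = n) :
    List.ofFn (fun i : Fin n => l.get (Fin.cast h.symm i)) = l := by
  subst h
  simp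

/-- Tuples satisfying the walk predicate are equivalent to lists satisfying `Pl`. -/
def tupleEquivList (n : ℕ) :
    {s : Fin n → Bool // walkFromOne n s n = 0 ∧ ∀ k, k < n → walkFromOne n s k ≠ 0} ≃
      {l : List Bool // l.length = n ∧ Pl l} where
  toFun s := ⟨List.ofFn s.1, List.length_ofFn, (P_iff_Pl n s.1).mp s.2⟩
  invFun l := ⟨fun i => l.1.get (Fin.cast l.2.1.symm i), by
    rw [P_iff_Pl, ofFn_get_cast l.1 l.2.1]; exact l.2.2⟩
  left_inv s := by
    apply Subtype.ext
    funext i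
    simp [List.get_ofFn]
  right_inv l := by
    apply Subtype.ext
    exact ofFn_get_cast l.1 l.2.1

lemma card_odd (m : ℕ) :
    Nat.card {s : Fin (2 * m + 1) → Bool // walkFromOne (2 * m + 1) s (2 * m + 1) = 0 ∧
      ∀ k, k < 2 * m + 1 → walkFromOne (2 * m + 1) s k ≠ 0} = catalan m := by
  rw [Nat.card_congr ((tupleEquivList (2 * m + 1)).trans (plEquivDyck m))]
  rw [Nat.card_eq_fintype_card]
  exact DyckWord.card_dyckWord_semilength_eq_catalan m

lemma card_even (m : ℕ) :
    Nat.card {s : Fin (2 * m) → Bool // walkFromOne (2 * m) s (2 * m) = 0 ∧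
      ∀ k, k < 2 * m → walkFromOne (2 * m) s k ≠ 0} = 0 := by
  rw [Nat.card_eq_zero]
  left
  constructor
  rintro ⟨s, hs⟩
  have hl := (P_iff_Pl (2 * m) s).mp hs
  have h1 := hl.1
  have h2 := bsum_eq_count (List.ofFn s)
  rw [List.length_ofFn] at h2
  omega

end GFaux

namespace GFaux

lemma centralBinom_le_four_pow (n : ℕ) : Nat.centralBinom n ≤ 4 ^ n := by
  induction n with
  | zero => simp [Nat.centralBinom]
  | succ n ih =>
    have h := Nat.succ_mul_centralBinom_succ n
    have h2 : (n + 1) * Nat.centralBinom (n + 1) ≤ (n + 1) * (4 * Nat.centralBinom n) := by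
      rw [h]; nlinarith [Nat.centralBinom_pos n]
    have h3 := Nat.le_of_mul_le_mul_left h2 (Nat.succ_pos n)
    calc Nat.centralBinom (n + 1) ≤ 4 * Nat.centralBinom n := h3
      _ ≤ 4 * 4 ^ n := by omega
      _ = 4 ^ (n + 1) := by ring

lemma catalan_le_four_pow (n : ℕ) : catalan n ≤ 4 ^ n := by
  have h1 : catalan n ≤ (n + 1) * catalan n := Nat.le_mul_of_pos_left _ (Nat.succ_pos n)
  rw [succ_mul_catalan_eq_centralBinom] at h1
  exact h1.trans (centralBinom_le_four_pow n)

/-- The Catalan generating function. -/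
noncomputable def catF (t : ℝ) : ℝ := ∑' m, (catalan m : ℝ) * t ^ m

lemma summable_cat {t : ℝ} (ht0 : 0 ≤ t) (ht4 : t < 1/4) :
    Summable (fun m => (catalan m : ℝ) * t ^ m) := by
  have hgeo : Summable (fun m : ℕ => (4 * t) ^ m) :=
    summable_geometric_of_lt_one (by linarith) (by linarith)
  refine Summable.of_nonneg_of_le (fun m => by positivity) (fun m => ?_) hgeo
  have h1 : (catalan m : ℝ) ≤ 4 ^ m := by
    exact_mod_cast (catalan_le_four_pow m).trans_eq (by norm_num)
  calc (catalan m : ℝ) * t ^ m ≤ 4 ^ m * t ^ m :=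
        mul_le_mul_of_nonneg_right h1 (by positivity)
    _ = (4 * t) ^ m := by rw [mul_pow]

set_option maxHeartbeats 1000000 in
lemma catF_eq {t : ℝ} (ht0 : 0 ≤ t) (ht4 : t < 1/4) : catF t = 1 + t * (catF t) ^ 2 := by
  have hs := summable_cat ht0 ht4
  have habs : Summable (fun m => ‖(catalan m : ℝ) * t ^ m‖) := by
    simpa only [Real.norm_eq_abs] using hs.abs
  have hfg : Summable (fun z : ℕ × ℕ =>
      ((catalan z.1 : ℝ) * t ^ z.1) * ((catalan z.2 : ℝ) * t ^ z.2)) :=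
    summable_mul_of_summable_norm habs habs
  have hsq : (catF t) ^ 2 = ∑' n : ℕ, (catalan (n + 1) : ℝ) * t ^ n := by
    rw [sq, catF, Summable.tsum_mul_tsum_eq_tsum_sum_antidiagonal hs hs hfg]
    congr 1
    funext n
    rw [catalan_succ']
    push_cast
    rw [Finset.sum_mul]
    apply Finset.sum_congr rfl
    intro kl hkl
    have hn : kl.1 + kl.2 = n := Finset.HasAntidiagonal.mem_antidiagonal.mp hkl
    rw [← hn, pow_add]
    ring
  have hshift : catF t = 1 + ∑' n : ℕ, (catalan (n + 1) : ℝ) * t ^ (n + 1) := by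
    rw [catF, Summable.tsum_eq_zero_add hs]
    norm_num
  rw [hsq, ← tsum_mul_left, hshift]
  congr 1
  exact tsum_congr fun n => by ring

lemma catF_mono {t t' : ℝ} (ht0 : 0 ≤ t) (h : t < t') (ht4 : t' < 1/4) :
    t * catF t < t' * catF t' := by
  have hs : Summable (fun m => (catalan m : ℝ) * t ^ (m + 1)) := by
    have := (summable_cat ht0 (h.trans ht4)).mul_left t
    apply this.congr
    intro m; ring
  have hs' : Summable (fun m => (catalan m : ℝ) * t' ^ (m + 1)) := by
    have := (summable_cat (ht0.trans h.le) ht4).mul_left t'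
    apply this.congr
    intro m; ring
  have h1 : t * catF t = ∑' m, (catalan m : ℝ) * t ^ (m + 1) := by
    rw [catF, ← tsum_mul_left]
    congr 1; funext m; ring
  have h2 : t' * catF t' = ∑' m, (catalan m : ℝ) * t' ^ (m + 1) := by
    rw [catF, ← tsum_mul_left]
    congr 1; funext m; ring
  rw [h1, h2]
  refine Summable.tsum_lt_tsum (i := 0) (fun m => ?_) ?_ hs hs'
  · apply mul_le_mul_of_nonneg_left _ (by positivity)
    exact pow_le_pow_left₀ ht0 h.le _
  · simp only [catalan_zero, Nat.cast_one, one_mul, pow_one, zero_add]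
    simpa using pow_lt_pow_left₀ h ht0 one_ne_zero

lemma tmul_lt_half {t : ℝ} (ht0 : 0 < t) (ht4 : t < 1/4) : t * catF t < 1/2 := by
  set a := t * catF t with ha
  set t' := (t + 1/4) / 2 with ht'
  set a' := t' * catF t' with ha'
  have htt' : t < t' := by rw [ht']; linarith
  have ht'4 : t' < 1/4 := by rw [ht']; linarith
  have hlt : a < a' := catF_mono ht0.le htt' ht'4
  have heq : a = t + a ^ 2 := by
    rw [ha]
    nth_rewrite 1 [catF_eq ht0.le (by linarith)]
    ring
  have heq' : a' = t' + a' ^ 2 := by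
    rw [ha']
    nth_rewrite 1 [catF_eq (by positivity) ht'4]
    ring
  by_contra hc
  push_neg at hc
  nlinarith [mul_pos (sub_pos.mpr hlt) (by linarith : (0:ℝ) < a + a' - 1)]

lemma catF_closed {t : ℝ} (ht0 : 0 < t) (ht4 : t < 1/4) :
    catF t = (1 - Real.sqrt (1 - 4 * t)) / (2 * t) := by
  set a := t * catF t with ha
  have hhalf : a < 1/2 := tmul_lt_half ht0 ht4
  have heq : a = t + a ^ 2 := by
    rw [ha]
    nth_rewrite 1 [catF_eq ht0.le ht4]
    ring
  have hsq : 1 - 4 * t = (1 - 2 * a) ^ 2 := by nlinarith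
  rw [hsq, Real.sqrt_sq (by linarith)]
  rw [ha]
  field_simp
  ring

end GFaux

/-- `P(T = n)` where `T = inf{t ≥ 0 : Y_t = 0}` for the simple symmetric random walk
started at `1`: the proportion of sign sequences of length `n` whose walk hits `0`
for the first time exactly at time `n`. -/
noncomputable def pFirstHitZero (n : ℕ) : ℝ :=
  (Nat.card {s : Fin n → Bool //
      walkFromOne n s n = 0 ∧ ∀ k, k < n → walkFromOne n s k ≠ 0} : ℝ) / 2 ^ n

namespace GFaux

lemma pFirstHitZero_odd (m : ℕ) :
    pFirstHitZero (2 * m + 1) = (catalan m : ℝ) / 2 ^ (2 * m + 1) := by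
  rw [pFirstHitZero, card_odd]

lemma pFirstHitZero_even (m : ℕ) : pFirstHitZero (2 * m) = 0 := by
  rw [pFirstHitZero, card_even]
  simp

end GFaux

/-- For the simple symmetric random walk on `ℤ` started at `1`, the generating function
of the first hitting time of `0` equals `g(x) = (1 - √(1 - x²))/x` for `x ∈ (0,1)`. -/
theorem generating_function_first_hit (x : ℝ) (hx0 : 0 < x) (hx1 : x < 1) :
    ∑' n : ℕ, x ^ n * pFirstHitZero n = (1 - Real.sqrt (1 - x ^ 2)) / x := by
  have hxne : x ≠ 0 := ne_of_gt hx0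
  set t : ℝ := x ^ 2 / 4 with ht
  have ht0 : 0 < t := by positivity
  have ht4 : t < 1/4 := by rw [ht]; nlinarith
  -- reduce to odd indices
  have hinj : Function.Injective (fun m : ℕ => 2 * m + 1) := by
    intro a b hab
    simp only at hab
    omega
  have hsupp : Function.support (fun n => x ^ n * pFirstHitZero n) ⊆
      Set.range (fun m : ℕ => 2 * m + 1) := by
    intro n hn
    by_contra hr
    apply hn
    rcases Nat.even_or_odd n with he | ho
    · obtain ⟨r, rfl⟩ := he
      show x ^ (r + r) * pFirstHitZero (r + r) = 0
      rw [show r + r = 2 * r from by omega, GFaux.pFirstHitZero_even, mul_zero]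
    · obtain ⟨r, rfl⟩ := ho
      exact absurd ⟨r, rfl⟩ hr
  have hstep := hinj.tsum_eq (f := fun n => x ^ n * pFirstHitZero n) hsupp
  rw [← hstep]
  have key : ∀ m : ℕ, x ^ (2 * m + 1) * pFirstHitZero (2 * m + 1) =
      (x / 2) * ((catalan m : ℝ) * t ^ m) := by
    intro m
    rw [GFaux.pFirstHitZero_odd, ht]
    rw [pow_succ, pow_succ]
    have h2 : (x ^ 2 / 4) ^ m = x ^ (2 * m) / 2 ^ (2 * m) := by
      rw [div_pow, ← pow_mul, show (4:ℝ) = 2 ^ 2 by norm_num, ← pow_mul]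
    rw [h2]
    have h2m : (0:ℝ) < 2 ^ (2 * m) := by positivity
    field_simp
  calc ∑' m : ℕ, x ^ (2 * m + 1) * pFirstHitZero (2 * m + 1)
      = ∑' m : ℕ, (x / 2) * ((catalan m : ℝ) * t ^ m) := tsum_congr key
    _ = (x / 2) * GFaux.catF t := by rw [tsum_mul_left]; rfl
    _ = (1 - Real.sqrt (1 - x ^ 2)) / x := by
        rw [GFaux.catF_closed ht0 ht4, ht]
        rw [show 1 - 4 * (x ^ 2 / 4) = 1 - x ^ 2 by ring]
        field_simp
        ring
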